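/- Let H₀ be a fixed symmetric positive definite n×n matrix and for each feature f in a finite set V let M_f be a symmetric positive semidefinite n×n matrix. Define ρ(S) = log det(H₀ + Σ_{f∈S} M_f) − log det(H₀) for S ⊆ V. Then ρ is a normalized, monotone, submodular set function. -/

import Mathlib

open Matrix

variable {n : ℕ}

-- Cauchy-Schwarz for a PSD real form
lemma psd_cauchy_schwarz {A : Matrix (Fin n) (Fin n) ℝ} (hA : A.PosSemidef)
    (x y : Fin n → ℝ) :
    (x ⬝ᵥ A *ᵥ y) ^ 2 ≤ (x ⬝ᵥ A *ᵥ x) * (y ⬝ᵥ A *ᵥ y) := by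
  have hsym : ∀ a b : Fin n → ℝ, a ⬝ᵥ A *ᵥ b = b ⬝ᵥ A *ᵥ a := by
    intro a b
    have := hA.1
    rw [Matrix.dotProduct_mulVec, ← Matrix.mulVec_transpose]
    nth_rewrite 1 [show Aᵀ = A from by
      ext i j; have := hA.1.apply j i; simpa using this.symm]
    rw [dotProduct_comm]
  have key : ∀ t : ℝ, 0 ≤ (y ⬝ᵥ A *ᵥ y) * (t * t) + (2 * (x ⬝ᵥ A *ᵥ y)) * t + (x ⬝ᵥ A *ᵥ x) := by
    intro t
    have h0 := hA.dotProduct_mulVec_nonneg (x + t • y)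
    simp only [star_trivial] at h0
    rw [Matrix.mulVec_add, Matrix.mulVec_smul, dotProduct_add, add_dotProduct,
      add_dotProduct, dotProduct_smul, smul_dotProduct, dotProduct_smul] at h0
    have hxy := hsym x y
    simp only [smul_dotProduct, dotProduct_smul, smul_eq_mul] at h0
    rw [hxy] at h0
    have he : (y ⬝ᵥ A *ᵥ y) * (t * t) + (2 * (x ⬝ᵥ A *ᵥ y)) * t + (x ⬝ᵥ A *ᵥ x)
        = x ⬝ᵥ A *ᵥ x + t * (y ⬝ᵥ A *ᵥ x) + (t * (y ⬝ᵥ A *ᵥ x) + t * (t * (y ⬝ᵥ A *ᵥ y))) := by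
      rw [hxy]; ring
    rw [he]; exact h0
  have := discrim_le_zero key
  unfold discrim at this
  nlinarith [this]


lemma herm_quad_comm {A : Matrix (Fin n) (Fin n) ℝ} (h : A.IsHermitian)
    (a b : Fin n → ℝ) : a ⬝ᵥ A *ᵥ b = b ⬝ᵥ A *ᵥ a := by
  rw [Matrix.dotProduct_mulVec, ← Matrix.mulVec_transpose]
  nth_rewrite 1 [show Aᵀ = A from by ext i j; have := h.apply j i; simpa using this.symm]
  rw [dotProduct_comm]

-- quadratic form of the inverse is antitone in the Loewner order
lemma inv_quadform_antitone {A B : Matrix (Fin n) (Fin n) ℝ}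
    (hA : A.PosDef) (hB : B.PosDef) (hAB : (B - A).PosSemidef) (u : Fin n → ℝ) :
    u ⬝ᵥ B⁻¹ *ᵥ u ≤ u ⬝ᵥ A⁻¹ *ᵥ u := by
  set x := A⁻¹ *ᵥ u with hx
  set y := B⁻¹ *ᵥ u with hy
  have hAx : A *ᵥ x = u := by
    rw [hx, Matrix.mulVec_mulVec, Matrix.mul_nonsing_inv A (isUnit_iff_ne_zero.2 hA.det_pos.ne'),
      Matrix.one_mulVec]
  have hBy : B *ᵥ y = u := by
    rw [hy, Matrix.mulVec_mulVec, Matrix.mul_nonsing_inv B (isUnit_iff_ne_zero.2 hB.det_pos.ne'),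
      Matrix.one_mulVec]
  have hc : u ⬝ᵥ y = y ⬝ᵥ B *ᵥ y := by rw [dotProduct_comm, ← hBy]
  have ha : u ⬝ᵥ x = x ⬝ᵥ A *ᵥ x := by rw [dotProduct_comm, ← hAx]
  have hcx : u ⬝ᵥ y = x ⬝ᵥ A *ᵥ y := by
    rw [dotProduct_comm, ← hAx, herm_quad_comm hA.1, dotProduct_comm]
  have hycomp : y ⬝ᵥ A *ᵥ y ≤ y ⬝ᵥ B *ᵥ y := by
    have h0 := hAB.dotProduct_mulVec_nonneg y
    simp only [star_trivial, Matrix.sub_mulVec, dotProduct_sub] at h0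
    linarith
  have hCS := psd_cauchy_schwarz hA.posSemidef x y
  have hcn : 0 ≤ y ⬝ᵥ B *ᵥ y := by simpa using hB.posSemidef.dotProduct_mulVec_nonneg y
  have hyan : 0 ≤ y ⬝ᵥ A *ᵥ y := by simpa using hA.posSemidef.dotProduct_mulVec_nonneg y
  have han : 0 ≤ x ⬝ᵥ A *ᵥ x := by simpa using hA.posSemidef.dotProduct_mulVec_nonneg x
  -- (u⬝ᵥy)^2 = (x⬝ᵥA*ᵥy)^2 ≤ (x⬝ᵥA*ᵥx)*(y⬝ᵥA*ᵥy) ≤ (u⬝ᵥx)*(u⬝ᵥy)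
  have key : (u ⬝ᵥ y) ^ 2 ≤ (u ⬝ᵥ x) * (u ⬝ᵥ y) := by
    calc (u ⬝ᵥ y) ^ 2 = (x ⬝ᵥ A *ᵥ y) ^ 2 := by rw [hcx]
      _ ≤ (x ⬝ᵥ A *ᵥ x) * (y ⬝ᵥ A *ᵥ y) := hCS
      _ ≤ (x ⬝ᵥ A *ᵥ x) * (y ⬝ᵥ B *ᵥ y) := mul_le_mul_of_nonneg_left hycomp han
      _ = (u ⬝ᵥ x) * (u ⬝ᵥ y) := by rw [ha, hc]
  have hcn' : 0 ≤ u ⬝ᵥ y := by rw [hc]; exact hcn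
  have han' : 0 ≤ u ⬝ᵥ x := by rw [ha]; exact han
  nlinarith [key, hcn', han']

lemma colrow_posSemidef (u : Fin n → ℝ) :
    (Matrix.replicateCol Unit u * Matrix.replicateRow Unit u).PosSemidef := by
  have h : (Matrix.replicateCol Unit u)ᴴ = Matrix.replicateRow Unit u := by
    ext i j
    simp [Matrix.replicateCol, Matrix.replicateRow]
  rw [← h]
  exact Matrix.posSemidef_self_mul_conjTranspose _

lemma det_rank_one_update {A : Matrix (Fin n) (Fin n) ℝ} (hA : A.PosDef) (u : Fin n → ℝ) :
    (A + Matrix.replicateCol Unit u * Matrix.replicateRow Unit u).det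
      = A.det * (1 + u ⬝ᵥ A⁻¹ *ᵥ u) := by
  rw [Matrix.det_add_replicateCol_mul_replicateRow (isUnit_iff_ne_zero.2 hA.det_pos.ne') u u]
  congr 1
  rw [Matrix.det_unique, Matrix.add_apply, Matrix.one_apply_eq, Matrix.mul_apply]
  congr 1
  simp only [Matrix.mul_apply, Matrix.replicateRow_apply, Matrix.replicateCol_apply, dotProduct, Matrix.mulVec,
    Finset.sum_mul, Finset.mul_sum]
  rw [Finset.sum_comm]
  refine Finset.sum_congr rfl fun i _ => Finset.sum_congr rfl fun j _ => by ring

lemma quad_nonneg {A : Matrix (Fin n) (Fin n) ℝ} (hA : A.PosSemidef) (u : Fin n → ℝ) :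
    0 ≤ u ⬝ᵥ A *ᵥ u := by simpa using hA.dotProduct_mulVec_nonneg u

lemma log_rank_one_gain {A : Matrix (Fin n) (Fin n) ℝ} (hA : A.PosDef) (u : Fin n → ℝ) :
    Real.log (A + Matrix.replicateCol Unit u * Matrix.replicateRow Unit u).det - Real.log A.det
      = Real.log (1 + u ⬝ᵥ A⁻¹ *ᵥ u) := by
  have hq : 0 ≤ u ⬝ᵥ A⁻¹ *ᵥ u := quad_nonneg hA.inv.posSemidef u
  rw [det_rank_one_update hA u, Real.log_mul hA.det_pos.ne' (by linarith)]
  ring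

lemma psd_sum {ι : Type*} (s : Finset ι) (N : ι → Matrix (Fin n) (Fin n) ℝ)
    (h : ∀ i, (N i).PosSemidef) : (∑ i ∈ s, N i).PosSemidef := by
  classical
  induction s using Finset.induction_on with
  | empty => simpa using Matrix.PosSemidef.zero
  | insert _ _ hj ih => rw [Finset.sum_insert hj]; exact (h _).add ih

lemma log_det_sum_nonneg {ι : Type*} [DecidableEq ι] (s : Finset ι) (u : ι → Fin n → ℝ)
    {A : Matrix (Fin n) (Fin n) ℝ} (hA : A.PosDef) :
    Real.log A.det
      ≤ Real.log (A + ∑ i ∈ s, Matrix.replicateCol Unit (u i) * Matrix.replicateRow Unit (u i)).det := by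
  induction s using Finset.induction_on with
  | empty => simp
  | @insert j s hj ih =>
    have hAs : (A + ∑ i ∈ s, Matrix.replicateCol Unit (u i) * Matrix.replicateRow Unit (u i)).PosDef :=
      hA.add_posSemidef (psd_sum s _ fun i => colrow_posSemidef (u i))
    have hgain := log_rank_one_gain hAs (u j)
    have hq : 0 ≤ (u j) ⬝ᵥ (A + ∑ i ∈ s, Matrix.replicateCol Unit (u i) * Matrix.replicateRow Unit (u i))⁻¹ *ᵥ (u j) :=
      quad_nonneg hAs.inv.posSemidef (u j)
    have hlog : 0 ≤ Real.log (1 + (u j) ⬝ᵥ (A + ∑ i ∈ s, Matrix.replicateCol Unit (u i) * Matrix.replicateRow Unit (u i))⁻¹ *ᵥ (u j)) :=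
      Real.log_nonneg (by linarith)
    rw [Finset.sum_insert hj, show A + (Matrix.replicateCol Unit (u j) * Matrix.replicateRow Unit (u j)
        + ∑ i ∈ s, Matrix.replicateCol Unit (u i) * Matrix.replicateRow Unit (u i))
      = (A + ∑ i ∈ s, Matrix.replicateCol Unit (u i) * Matrix.replicateRow Unit (u i))
        + Matrix.replicateCol Unit (u j) * Matrix.replicateRow Unit (u j) from by abel]
    linarith

lemma log_det_gain_antitone_sum {ι : Type*} [DecidableEq ι] (s : Finset ι) (u : ι → Fin n → ℝ)
    {A B : Matrix (Fin n) (Fin n) ℝ} (hA : A.PosDef) (hB : B.PosDef)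
    (hAB : (B - A).PosSemidef) :
    Real.log (B + ∑ i ∈ s, Matrix.replicateCol Unit (u i) * Matrix.replicateRow Unit (u i)).det - Real.log B.det
      ≤ Real.log (A + ∑ i ∈ s, Matrix.replicateCol Unit (u i) * Matrix.replicateRow Unit (u i)).det
          - Real.log A.det := by
  induction s using Finset.induction_on with
  | empty => simp
  | @insert j s hj ih =>
    set P := ∑ i ∈ s, Matrix.replicateCol Unit (u i) * Matrix.replicateRow Unit (u i) with hP
    have hPpsd : P.PosSemidef := psd_sum s _ fun i => colrow_posSemidef (u i)
    have hAP : (A + P).PosDef := hA.add_posSemidef hPpsd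
    have hBP : (B + P).PosDef := hB.add_posSemidef hPpsd
    have hdiff : ((B + P) - (A + P)).PosSemidef := by
      have : (B + P) - (A + P) = B - A := by abel
      rw [this]; exact hAB
    have hstep := inv_quadform_antitone hAP hBP hdiff (u j)
    have hqA : 0 ≤ (u j) ⬝ᵥ (A + P)⁻¹ *ᵥ (u j) := quad_nonneg hAP.inv.posSemidef (u j)
    have hqB : 0 ≤ (u j) ⬝ᵥ (B + P)⁻¹ *ᵥ (u j) := quad_nonneg hBP.inv.posSemidef (u j)
    have hlogle : Real.log (1 + (u j) ⬝ᵥ (B + P)⁻¹ *ᵥ (u j))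
        ≤ Real.log (1 + (u j) ⬝ᵥ (A + P)⁻¹ *ᵥ (u j)) :=
      Real.log_le_log (by linarith) (by linarith)
    have hgA := log_rank_one_gain hAP (u j)
    have hgB := log_rank_one_gain hBP (u j)
    rw [Finset.sum_insert hj,
      show A + (Matrix.replicateCol Unit (u j) * Matrix.replicateRow Unit (u j) + P)
        = (A + P) + Matrix.replicateCol Unit (u j) * Matrix.replicateRow Unit (u j) from by abel,
      show B + (Matrix.replicateCol Unit (u j) * Matrix.replicateRow Unit (u j) + P)
        = (B + P) + Matrix.replicateCol Unit (u j) * Matrix.replicateRow Unit (u j) from by abel]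
    linarith

open scoped MatrixOrder in
lemma psd_decomp {M : Matrix (Fin n) (Fin n) ℝ} (hM : M.PosSemidef) :
    ∃ u : Fin n → Fin n → ℝ,
      M = ∑ i : Fin n, Matrix.replicateCol Unit (u i) * Matrix.replicateRow Unit (u i) := by
  set R := CFC.sqrt M with hR
  refine ⟨fun i j => R j i, ?_⟩
  have hRR : R * R = M := CFC.sqrt_mul_sqrt_self M hM.nonneg
  have hRsym : ∀ i j, R i j = R j i := by
    intro i j
    have := (CFC.sqrt_nonneg M).posSemidef.1.apply j i
    simpa using this
  ext j k
  rw [← hRR, Matrix.mul_apply, Matrix.sum_apply]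
  refine Finset.sum_congr rfl fun i _ => ?_
  rw [Matrix.mul_apply]
  simp [Matrix.replicateCol_apply, Matrix.replicateRow_apply, hRsym i k]

lemma log_det_le_add_psd {A M : Matrix (Fin n) (Fin n) ℝ} (hA : A.PosDef)
    (hM : M.PosSemidef) : Real.log A.det ≤ Real.log (A + M).det := by
  obtain ⟨u, hu⟩ := psd_decomp hM
  rw [hu]
  exact log_det_sum_nonneg Finset.univ u hA

lemma log_det_gain_antitone {A B M : Matrix (Fin n) (Fin n) ℝ} (hA : A.PosDef)
    (hB : B.PosDef) (hAB : (B - A).PosSemidef) (hM : M.PosSemidef) :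
    Real.log (B + M).det - Real.log B.det ≤ Real.log (A + M).det - Real.log A.det := by
  obtain ⟨u, hu⟩ := psd_decomp hM
  rw [hu]
  exact log_det_gain_antitone_sum Finset.univ u hA hB hAB

/-- The log-det information gain is a normalized, monotone, submodular set function. -/
theorem logdet_gain_submodular {V : Type*} [Fintype V] [DecidableEq V]
    (n : ℕ) (H₀ : Matrix (Fin n) (Fin n) ℝ) (M : V → Matrix (Fin n) (Fin n) ℝ)
    (hH₀ : H₀.PosDef) (hM : ∀ f, (M f).PosSemidef)
    (ρ : Finset V → ℝ)
    (hρ : ∀ S : Finset V, ρ S = Real.log (H₀ + ∑ f ∈ S, M f).det - Real.log H₀.det) :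
    ρ ∅ = 0 ∧
    (∀ S T : Finset V, S ⊆ T → ρ S ≤ ρ T) ∧
    (∀ S T : Finset V, S ⊆ T → ∀ e ∉ T,
      ρ (insert e S) - ρ S ≥ ρ (insert e T) - ρ T) := by
  have hPD : ∀ S : Finset V, (H₀ + ∑ f ∈ S, M f).PosDef := fun S =>
    hH₀.add_posSemidef (psd_sum S M hM)
  refine ⟨by simp [hρ ∅], ?_, ?_⟩
  · intro S T hST
    rw [hρ S, hρ T]
    have hsplit : (∑ f ∈ T, M f) = (∑ f ∈ S, M f) + ∑ f ∈ T \ S, M f := by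
      rw [add_comm, Finset.sum_sdiff hST]
    have := log_det_le_add_psd (hPD S) (psd_sum (T \ S) M hM)
    rw [hsplit, ← add_assoc] at *
    linarith
  · intro S T hST e heT
    have heS : e ∉ S := fun h => heT (hST h)
    rw [hρ (insert e S), hρ S, hρ (insert e T), hρ T,
      Finset.sum_insert heS, Finset.sum_insert heT]
    have hdiff : ((H₀ + ∑ f ∈ T, M f) - (H₀ + ∑ f ∈ S, M f)).PosSemidef := by
      have h1 : (H₀ + ∑ f ∈ T, M f) - (H₀ + ∑ f ∈ S, M f) = ∑ f ∈ T \ S, M f := by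
        rw [show (∑ f ∈ T, M f) = (∑ f ∈ S, M f) + ∑ f ∈ T \ S, M f from by
          rw [add_comm, Finset.sum_sdiff hST]]
        abel
      rw [h1]; exact psd_sum _ M hM
    have := log_det_gain_antitone (hPD S) (hPD T) hdiff (hM e)
    have hrS : H₀ + (M e + ∑ f ∈ S, M f) = (H₀ + ∑ f ∈ S, M f) + M e := by abel
    have hrT : H₀ + (M e + ∑ f ∈ T, M f) = (H₀ + ∑ f ∈ T, M f) + M e := by abel
    rw [hrS, hrT]
    linarith
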